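/- A 3-regular graph with no perfect matching admits no zero-sum 4-flow. -/

import Mathlib

open Finset SimpleGraph

/-!
At a vertex of a cubic graph the three flow values are nonzero, lie in `[-3, 3]` and sum to zero;
such a triple always contains exactly one even value. Hence the edges of even flow value form a
perfect matching.
-/

/-- Three odd values cannot sum to zero, and two values `±2` would force the third to be
`0` or `±4`. -/
lemma Finset.existsUnique_even_of_sum_eq_zero {α : Type*} {s : Finset α} (hs : #s = 3)
    {g : α → ℤ} (hg : ∀ x ∈ s, g x ≠ 0 ∧ (g x).natAbs ≤ 3) (hsum : ∑ x ∈ s, g x = 0) :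
    ∃! x, x ∈ s ∧ Even (g x) := by
  classical
  obtain ⟨a, b, c, hab, hac, hbc, rfl⟩ := card_eq_three.mp hs
  rw [sum_insert (by simp [hab, hac]), sum_insert (by simp [hbc]), sum_singleton] at hsum
  have ha := hg a (by simp)
  have hb := hg b (by simp)
  have hc := hg c (by simp)
  simp only [mem_insert, mem_singleton, Int.even_iff]
  have one_even : (g a % 2 = 0 ∧ g b % 2 ≠ 0 ∧ g c % 2 ≠ 0) ∨ (g a % 2 ≠ 0 ∧ g b % 2 = 0 ∧ g c % 2 ≠ 0) ∨
      (g a % 2 ≠ 0 ∧ g b % 2 ≠ 0 ∧ g c % 2 = 0) := by omega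
  rcases one_even with ⟨h₁, h₂, h₃⟩ | ⟨h₁, h₂, h₃⟩ | ⟨h₁, h₂, h₃⟩
  · exact ⟨a, ⟨.inl rfl, h₁⟩, by rintro x ⟨rfl | rfl | rfl, hx⟩ <;> simp_all⟩
  · exact ⟨b, ⟨.inr (.inl rfl), h₂⟩, by rintro x ⟨rfl | rfl | rfl, hx⟩ <;> simp_all⟩
  · exact ⟨c, ⟨.inr (.inr rfl), h₃⟩, by rintro x ⟨rfl | rfl | rfl, hx⟩ <;> simp_all⟩

namespace SimpleGraph

variable {V : Type*} {G : SimpleGraph V}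

lemma incidenceFinset_eq_image_neighborFinset [DecidableEq V] (v : V)
    [Fintype (G.neighborSet v)] :
    G.incidenceFinset v = (G.neighborFinset v).image (s(v, ·)) := by
  ext e
  induction e using Sym2.ind with
  | _ x y =>
    simp only [mem_incidenceFinset, mk'_mem_incidenceSet_iff, mem_image, mem_neighborFinset,
      Sym2.eq_iff]
    grind [adj_comm]

lemma sum_incidenceFinset_eq_sum_neighborFinset {M : Type*} [AddCommMonoid M] [DecidableEq V]
    (v : V) [Fintype (G.neighborSet v)] (f : Sym2 V → M) :
    ∑ e ∈ G.incidenceFinset v, f e = ∑ w ∈ G.neighborFinset v, f s(v, w) := by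
  rw [incidenceFinset_eq_image_neighborFinset,
    sum_image fun _ _ _ _ h ↦ Sym2.congr_right.mp h]

lemma exists_isPerfectMatching_of_existsUnique (P : Sym2 V → Prop)
    (h : ∀ v, ∃! w, G.Adj v w ∧ P s(v, w)) : ∃ M : G.Subgraph, M.IsPerfectMatching :=
  ⟨toSubgraph (G.deleteEdges {e | ¬P e}) (deleteEdges_le _),
    Subgraph.isPerfectMatching_iff.mpr fun v ↦ by simpa using h v⟩

end SimpleGraph

/-- A 3-regular graph with no perfect matching admits no zero-sum 4-flow. -/
theorem stmt_9 {V : Type*} [Fintype V] [DecidableEq V] (G : SimpleGraph V)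
    [DecidableRel G.Adj] (hreg : G.IsRegularOfDegree 3)
    (hpm : ¬ ∃ M : G.Subgraph, M.IsPerfectMatching) :
    ¬ ∃ f : Sym2 V → ℤ,
      (∀ e ∈ G.edgeFinset, f e ≠ 0 ∧ (f e).natAbs ≤ 3) ∧
      (∀ v : V, ∑ e ∈ G.incidenceFinset v, f e = 0) := by
  rintro ⟨f, hf, hsum⟩
  refine hpm (exists_isPerfectMatching_of_existsUnique (fun e ↦ Even (f e)) fun v ↦ ?_)
  have key := existsUnique_even_of_sum_eq_zero (hreg v) (g := fun w ↦ f s(v, w))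
    (fun w hw ↦ hf _ (by simpa using hw))
    (by rw [← sum_incidenceFinset_eq_sum_neighborFinset]; exact hsum v)
  simpa using key
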